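/- arXiv:2012.05435 — 3 statements merged into one kernel-verified Lean document; each statement's English description precedes it below -/
import Mathlib

section
/- (Proposition 1, part 1: monotone descent of Algorithm 1 with the optimality-checking control mechanism.) Let (u^t), (v^t) be sequences in E such that for every t: (i) Ψ(v^t) ≤ Ψ(u^t) (the optimality check selects v^t among candidates whose objective value does not exceed Ψ(u^t)); (ii) γ^t > L; and (iii) u^{t+1} minimizes over E the objective u ↦ φ(u) + (γ^t/2)·‖u − v^t + (1/γ^t)·∇f(v^t)‖². Then for every t, Ψ(u^{t+1}) + β^t·‖u^{t+1} − v^t‖² ≤ Ψ(u^t) with β^t = (γ^t − L)/2 > 0; in particular the sequence Ψ(u^t) is nonincreasing. -/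
/-!
Each step is the classical sufficient-decrease estimate of the proximal gradient method.
Comparing the proximal minimizer `u (t+1)` with the candidate `v t` gives
`φ (u (t+1)) + γ/2 ‖u (t+1) - v t‖² + ⟪∇f (v t), u (t+1) - v t⟫ ≤ φ (v t)`, and the descent
lemma `f x ≤ f y + ⟪∇f y, x - y⟫ + L/2 ‖x - y‖²` turns this into
`Ψ (u (t+1)) + (γ - L)/2 ‖u (t+1) - v t‖² ≤ Ψ (v t)`; the optimality check `Ψ (v t) ≤ Ψ (u t)`
finishes the step.
-/

open scoped RealInnerProductSpace

open Set

section
variable {E : Type*} [NormedAddCommGroup E] [InnerProductSpace ℝ E]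

theorem le_add_inner_add_sq_of_lipschitz_gradient {f : E → ℝ} {gradf : E → E} {L : ℝ}
    (hgrad : ∀ x, HasFDerivAt f (innerSL ℝ (gradf x)) x)
    (hlip : ∀ x y, ‖gradf x - gradf y‖ ≤ L * ‖x - y‖) (x y : E) :
    f x ≤ f y + ⟪gradf y, x - y⟫ + L / 2 * ‖x - y‖ ^ 2 := by
  set d := x - y
  -- `h 1 ≤ h 0` is the claim; `h` decreases on `[0, 1]` since `‖∇f (y + t d) - ∇f y‖ ≤ L t ‖d‖`.
  set h : ℝ → ℝ := fun t => f (y + t • d) - t * ⟪gradf y, d⟫ - L / 2 * t ^ 2 * ‖d‖ ^ 2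
  have hderiv : ∀ t : ℝ,
      HasDerivAt h (⟪gradf (y + t • d), d⟫ - ⟪gradf y, d⟫ - L * t * ‖d‖ ^ 2) t := by
    intro t
    have hline : HasDerivAt (fun s : ℝ => y + s • d) d t := by
      simpa using ((hasDerivAt_id t).smul_const d).const_add y
    refine ((((hgrad _).comp_hasDerivAt t hline).sub
      ((hasDerivAt_id t).mul_const ⟪gradf y, d⟫)).sub
      (((hasDerivAt_pow 2 t).const_mul (L / 2)).mul_const (‖d‖ ^ 2))).congr_deriv ?_
    simp only [innerSL_apply_apply]
    ring
  have hanti : AntitoneOn h (Icc 0 1) := by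
    refine antitoneOn_of_hasDerivWithinAt_nonpos (convex_Icc 0 1)
      (fun t _ => (hderiv t).continuousAt.continuousWithinAt)
      (fun t _ => (hderiv t).hasDerivWithinAt) fun t ht => ?_
    rw [interior_Icc] at ht
    have hstep : ‖gradf (y + t • d) - gradf y‖ ≤ L * t * ‖d‖ := by
      simpa [norm_smul, abs_of_pos ht.1, mul_assoc] using hlip (y + t • d) y
    calc ⟪gradf (y + t • d), d⟫ - ⟪gradf y, d⟫ - L * t * ‖d‖ ^ 2
        = ⟪gradf (y + t • d) - gradf y, d⟫ - L * t * ‖d‖ ^ 2 := by rw [inner_sub_left]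
      _ ≤ ‖gradf (y + t • d) - gradf y‖ * ‖d‖ - L * t * ‖d‖ ^ 2 := by
          gcongr
          exact real_inner_le_norm _ _
      _ ≤ 0 := by nlinarith [norm_nonneg d]
  have := hanti (left_mem_Icc.2 zero_le_one) (right_mem_Icc.2 zero_le_one) zero_le_one
  simp only [h, d, one_smul, zero_smul, add_sub_cancel, add_zero, one_mul, zero_mul, one_pow,
    mul_one, sub_zero, ne_eq, OfNat.ofNat_ne_zero, not_false_eq_true, zero_pow, mul_zero] at this
  linarith

theorem le_of_prox_minimizer {φ : E → ℝ} {γ : ℝ} (hγ : γ ≠ 0) {p v g : E}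
    (hmin : ∀ x, φ p + γ / 2 * ‖p - v + (1 / γ) • g‖ ^ 2 ≤
      φ x + γ / 2 * ‖x - v + (1 / γ) • g‖ ^ 2) :
    φ p + γ / 2 * ‖p - v‖ ^ 2 + ⟪g, p - v⟫ ≤ φ v := by
  have hexpand : γ / 2 * ‖p - v + (1 / γ) • g‖ ^ 2 =
      γ / 2 * ‖p - v‖ ^ 2 + ⟪g, p - v⟫ + γ / 2 * ‖(1 / γ) • g‖ ^ 2 := by
    rw [norm_add_sq_real, real_inner_smul_right, real_inner_comm]
    field_simp
  have := hmin v
  rw [sub_self, zero_add, hexpand] at this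
  linarith

theorem prox_grad_step_descent {f φ : E → ℝ} {gradf : E → E} {L γ : ℝ}
    (hgrad : ∀ x, HasFDerivAt f (innerSL ℝ (gradf x)) x)
    (hlip : ∀ x y, ‖gradf x - gradf y‖ ≤ L * ‖x - y‖) (hγ : γ ≠ 0) {p v : E}
    (hmin : ∀ x, φ p + γ / 2 * ‖p - v + (1 / γ) • gradf v‖ ^ 2 ≤
      φ x + γ / 2 * ‖x - v + (1 / γ) • gradf v‖ ^ 2) :
    f p + φ p + (γ - L) / 2 * ‖p - v‖ ^ 2 ≤ f v + φ v := by
  have hprox := le_of_prox_minimizer hγ hmin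
  have hdescent := le_add_inner_add_sq_of_lipschitz_gradient hgrad hlip p v
  linarith

end

/-- Proposition 1, part 1: monotone descent of Algorithm 1 with the
optimality-checking control mechanism: if for every `t`, `Ψ(v t) ≤ Ψ(u t)`,
`γ t > L`, and `u (t+1)` minimizes `x ↦ φ x + (γ t/2)·‖x − v t + (1/γ t)·∇f(v t)‖²`,
then for every `t`, `Ψ(u (t+1)) + ((γ t − L)/2)·‖u (t+1) − v t‖² ≤ Ψ(u t)` with
`(γ t − L)/2 > 0`; in particular `Ψ(u t)` is nonincreasing. -/
theorem stmt3
    {E : Type*} [NormedAddCommGroup E] [InnerProductSpace ℝ E]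
    (f : E → ℝ) (φ : E → ℝ) (gradf : E → E) (L : ℝ)
    (hL : 0 < L)
    (hgrad : ∀ x : E, HasFDerivAt f (innerSL ℝ (gradf x)) x)
    (hlip : ∀ x y : E, ‖gradf x - gradf y‖ ≤ L * ‖x - y‖)
    (Ψ : E → ℝ) (hΨ : ∀ x : E, Ψ x = f x + φ x)
    (u v : ℕ → E) (γ : ℕ → ℝ)
    (hcheck : ∀ t : ℕ, Ψ (v t) ≤ Ψ (u t))
    (hγ : ∀ t : ℕ, γ t > L)
    (hmin : ∀ t : ℕ, ∀ x : E,
      φ (u (t + 1)) + (γ t / 2) * ‖u (t + 1) - v t + (1 / γ t) • gradf (v t)‖ ^ 2 ≤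
        φ x + (γ t / 2) * ‖x - v t + (1 / γ t) • gradf (v t)‖ ^ 2) :
    (∀ t : ℕ, (γ t - L) / 2 > 0 ∧
        Ψ (u (t + 1)) + ((γ t - L) / 2) * ‖u (t + 1) - v t‖ ^ 2 ≤ Ψ (u t)) ∧
      (∀ t : ℕ, Ψ (u (t + 1)) ≤ Ψ (u t)) := by
  have hβ : ∀ t, (γ t - L) / 2 > 0 := fun t => by linarith [hγ t]
  have hstep : ∀ t, Ψ (u (t + 1)) + ((γ t - L) / 2) * ‖u (t + 1) - v t‖ ^ 2 ≤ Ψ (u t) := by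
    intro t
    have hdescent := prox_grad_step_descent hgrad hlip (hL.trans (hγ t)).ne' (hmin t)
    have hcheck_t := hcheck t
    simp only [hΨ] at hcheck_t ⊢
    linarith
  exact ⟨fun t => ⟨hβ t, hstep t⟩, fun t =>
    (le_add_of_nonneg_right (mul_nonneg (hβ t).le (sq_nonneg _))).trans (hstep t)⟩
end

section
/- Suppose moreover that Ψ is bounded below on E and that γ^t ≥ γ_min for all t, where γ_min > L. Then under the hypotheses of the monotone descent property (Ψ(v^t) ≤ Ψ(u^t) and u^{t+1} minimizing u ↦ φ(u) + (γ^t/2)·‖u − v^t + (1/γ^t)·∇f(v^t)‖² for each t), the series ∑_t ‖u^{t+1} − v^t‖² converges; in particular ‖u^{t+1} − v^t‖ → 0 as t → ∞. -/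
open scoped RealInnerProductSpace

/-! Comparing the prox-objective at `u (t+1)` with its value at `v t`, and bounding `f (u (t+1))`
by the quadratic upper model of an `L`-smooth function, gives the sufficient decrease
`Ψ (u (t+1)) + (γ t - L)/2 ‖u (t+1) - v t‖² ≤ Ψ (v t) ≤ Ψ (u t)`. Since `γ t - L ≥ γ_min - L > 0`,
the squared steps are dominated by the decrements of `Ψ (u t)`, which telescope and are bounded
because `Ψ` is bounded below. -/

section DescentLemma

variable {F : Type*} [NormedAddCommGroup F] [NormedSpace ℝ F]

/-- The descent lemma: a function with `L`-Lipschitz derivative lies below its quadratic model. -/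
theorem le_add_fderiv_add_half_mul_norm_sq {f : F → ℝ} {f' : F → F →L[ℝ] ℝ} {L : ℝ}
    (hf : ∀ x, HasFDerivAt f (f' x) x) (hlip : ∀ x y, ‖f' x - f' y‖ ≤ L * ‖x - y‖) (x y : F) :
    f y ≤ f x + f' x (y - x) + L / 2 * ‖y - x‖ ^ 2 := by
  set d := y - x
  -- the gap between `f` and its quadratic model along the segment is antitone
  set h : ℝ → ℝ := fun s => f (x + s • d) - s * f' x d - L / 2 * s ^ 2 * ‖d‖ ^ 2
  set h' : ℝ → ℝ := fun s => f' (x + s • d) d - f' x d - L * s * ‖d‖ ^ 2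
  have hderiv : ∀ s, HasDerivAt h (h' s) s := by
    intro s
    have hline : HasDerivAt (fun s : ℝ => x + s • d) d s := by
      simpa using ((hasDerivAt_id s).smul_const d).const_add x
    have hcomp : HasDerivAt (fun s : ℝ => f (x + s • d)) (f' (x + s • d) d) s :=
      (hf _).comp_hasDerivAt s hline
    have hquad := ((hasDerivAt_pow 2 s).const_mul (L / 2)).mul_const (‖d‖ ^ 2)
    refine ((hcomp.sub (hasDerivAt_mul_const (f' x d))).sub hquad).congr_deriv ?_
    simp only [h']
    ring
  have hslope : ∀ s ∈ interior (Set.Ici (0 : ℝ)), h' s ≤ 0 := by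
    intro s hs
    rw [interior_Ici, Set.mem_Ioi] at hs
    have : f' (x + s • d) d - f' x d ≤ L * s * ‖d‖ ^ 2 :=
      calc f' (x + s • d) d - f' x d = (f' (x + s • d) - f' x) d := rfl
        _ ≤ ‖f' (x + s • d) - f' x‖ * ‖d‖ :=
          (Real.le_norm_self _).trans (ContinuousLinearMap.le_opNorm _ _)
        _ ≤ L * ‖x + s • d - x‖ * ‖d‖ := by gcongr; exact hlip _ _
        _ = L * s * ‖d‖ ^ 2 := by
          rw [add_sub_cancel_left, norm_smul, Real.norm_of_nonneg hs.le]; ring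
    simp only [h']
    linarith
  have hanti := antitoneOn_of_hasDerivWithinAt_nonpos (convex_Ici 0)
    (fun s _ => (hderiv s).continuousAt.continuousWithinAt)
    (fun s _ => (hderiv s).hasDerivWithinAt) hslope
  have := hanti Set.self_mem_Ici (Set.mem_Ici.2 zero_le_one) zero_le_one
  simp only [h, d, zero_smul, add_zero, one_smul, add_sub_cancel] at this
  linarith

end DescentLemma

section ProximalGradient

variable {E : Type*} [NormedAddCommGroup E] [InnerProductSpace ℝ E]

theorem le_add_inner_add_half_mul_norm_sq {f : E → ℝ} {gradf : E → E} {L : ℝ}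
    (hgrad : ∀ x, HasFDerivAt f (innerSL ℝ (gradf x)) x)
    (hlip : ∀ x y, ‖gradf x - gradf y‖ ≤ L * ‖x - y‖) (x y : E) :
    f y ≤ f x + ⟪gradf x, y - x⟫ + L / 2 * ‖y - x‖ ^ 2 :=
  le_add_fderiv_add_half_mul_norm_sq hgrad
    (fun x y => by rw [← map_sub, innerSL_apply_norm]; exact hlip x y) x y

theorem half_mul_norm_add_inv_smul_sq {γ : ℝ} (hγ : γ ≠ 0) (d g : E) :
    γ / 2 * ‖d + (1 / γ) • g‖ ^ 2 = γ / 2 * ‖d‖ ^ 2 + ⟪g, d⟫ + ‖g‖ ^ 2 / (2 * γ) := by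
  rw [norm_add_sq_real, real_inner_smul_right, norm_smul, real_inner_comm, Real.norm_eq_abs,
    mul_pow, sq_abs]
  field_simp

/-- Sufficient decrease of one forward–backward step `x ↦ x⁺` with step size `1 / γ`. -/
theorem add_sub_mul_norm_sq_le_of_prox_le {f φ : E → ℝ} {gradf : E → E} {L γ : ℝ}
    (hgrad : ∀ x, HasFDerivAt f (innerSL ℝ (gradf x)) x)
    (hlip : ∀ x y, ‖gradf x - gradf y‖ ≤ L * ‖x - y‖) (hγ : γ ≠ 0) {x x' : E}
    (hprox : φ x' + γ / 2 * ‖x' - x + (1 / γ) • gradf x‖ ^ 2 ≤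
      φ x + γ / 2 * ‖x - x + (1 / γ) • gradf x‖ ^ 2) :
    f x' + φ x' + (γ - L) / 2 * ‖x' - x‖ ^ 2 ≤ f x + φ x := by
  rw [half_mul_norm_add_inv_smul_sq hγ, half_mul_norm_add_inv_smul_sq hγ, sub_self,
    norm_zero, inner_zero_right] at hprox
  have := le_add_inner_add_half_mul_norm_sq hgrad hlip x x'
  linarith

end ProximalGradient

theorem summable_of_add_le_of_bddBelow {a b : ℕ → ℝ} (hb : ∀ t, 0 ≤ b t)
    (hdecr : ∀ t, a (t + 1) + b t ≤ a t) (ha : BddBelow (Set.range a)) : Summable b := by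
  obtain ⟨m, hm⟩ := ha
  refine summable_of_sum_range_le (c := a 0 - m) hb fun n => ?_
  calc ∑ t ∈ Finset.range n, b t ≤ ∑ t ∈ Finset.range n, (a t - a (t + 1)) :=
        Finset.sum_le_sum fun t _ => by linarith [hdecr t]
    _ = a 0 - a n := Finset.sum_range_sub' a n
    _ ≤ a 0 - m := by linarith [hm (Set.mem_range_self n)]

/-- if moreover `Ψ` is bounded below and `γ t ≥ γ_min > L` for all
`t`, then under the monotone-descent hypotheses, `∑ t, ‖u (t+1) − v t‖²`
converges; in particular `‖u (t+1) − v t‖ → 0`. -/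
theorem stmt4
    {E : Type*} [NormedAddCommGroup E] [InnerProductSpace ℝ E]
    (f : E → ℝ) (φ : E → ℝ) (gradf : E → E) (L : ℝ)
    (hL : 0 < L)
    (hgrad : ∀ x : E, HasFDerivAt f (innerSL ℝ (gradf x)) x)
    (hlip : ∀ x y : E, ‖gradf x - gradf y‖ ≤ L * ‖x - y‖)
    (Ψ : E → ℝ) (hΨ : ∀ x : E, Ψ x = f x + φ x)
    (u v : ℕ → E) (γ : ℕ → ℝ) (γ_min : ℝ)
    (hbdd : ∃ m : ℝ, ∀ x : E, m ≤ Ψ x)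
    (hγmin : γ_min > L)
    (hγ : ∀ t : ℕ, γ t ≥ γ_min)
    (hcheck : ∀ t : ℕ, Ψ (v t) ≤ Ψ (u t))
    (hmin : ∀ t : ℕ, ∀ x : E,
      φ (u (t + 1)) + (γ t / 2) * ‖u (t + 1) - v t + (1 / γ t) • gradf (v t)‖ ^ 2 ≤
        φ x + (γ t / 2) * ‖x - v t + (1 / γ t) • gradf (v t)‖ ^ 2) :
    Summable (fun t : ℕ => ‖u (t + 1) - v t‖ ^ 2) ∧
      Filter.Tendsto (fun t : ℕ => ‖u (t + 1) - v t‖) Filter.atTop (nhds 0) := by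
  set c := (γ_min - L) / 2
  have hc : 0 < c := by simp only [c]; linarith
  have hdecr : ∀ t, Ψ (u (t + 1)) + c * ‖u (t + 1) - v t‖ ^ 2 ≤ Ψ (u t) := fun t => by
    have hγL : c ≤ (γ t - L) / 2 := by simp only [c]; linarith [hγ t]
    have hstep := add_sub_mul_norm_sq_le_of_prox_le hgrad hlip
      (hL.trans (hγmin.trans_le (hγ t))).ne' (hmin t (v t))
    rw [← hΨ, ← hΨ] at hstep
    linarith [hcheck t, mul_le_mul_of_nonneg_right hγL (sq_nonneg ‖u (t + 1) - v t‖)]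
  have hsum : Summable fun t => ‖u (t + 1) - v t‖ ^ 2 := by
    obtain ⟨m, hm⟩ := hbdd
    exact (summable_mul_left_iff hc.ne').1 <| summable_of_add_le_of_bddBelow
      (a := fun t => Ψ (u t)) (fun t => by positivity) hdecr
      ⟨m, Set.forall_mem_range.2 fun t => hm _⟩
  refine ⟨hsum, ?_⟩
  simpa [Real.sqrt_sq (norm_nonneg _)] using hsum.tendsto_atTop_zero.sqrt
end

section
/- (Contraction factor of the gradient step.) Suppose f is ρ-strongly convex (i.e. u ↦ f(u) − (ρ/2)·‖u‖² is convex) with ρ > 0 and ∇f is Lipschitz continuous with constant L > 0. If γ ≥ (ρ + L)/2, then the gradient-step map G_γ(x) := x − (1/γ)·∇f(x) is Lipschitz continuous with constant √(1 − 2ρL/(γ·(ρ + L))); in particular this constant lies in [0, 1) so G_γ is a strict contraction. -/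
/-!
Write `f = φ + (ρ/2)‖·‖²` with `φ` convex. Lipschitz continuity of `∇f` makes `(L/2)‖·‖² - f`
convex, which is an `(L - ρ)`-quadratic upper bound for `φ`; a convex function with such a bound
has `(L - ρ)`-cocoercive gradient. Unfolding `φ` gives
`ρL‖x - y‖² + ‖∇f x - ∇f y‖² ≤ (ρ + L)⟪∇f x - ∇f y, x - y⟫` (for `L ≤ ρ` this already follows
from strong monotonicity). Expanding `‖G x - G y‖²` with this inequality, and using
`γ ≥ (ρ + L)/2` to drop the `‖∇f x - ∇f y‖²` term, gives the contraction factor.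
-/

open scoped RealInnerProductSpace

open AffineMap

section ConvexGradient

variable {E : Type*} [NormedAddCommGroup E] [InnerProductSpace ℝ E] {Φ : E → ℝ} {g : E → E}

theorem hasDerivAt_comp_lineMap (hΦ : ∀ x, HasFDerivAt Φ (innerSL ℝ (g x)) x) (x y : E) (t : ℝ) :
    HasDerivAt (Φ ∘ lineMap x y) ⟪g (lineMap x y t), y - x⟫ t := by
  simpa using (hΦ (lineMap x y t)).comp_hasDerivAt t (hasDerivAt_lineMap (a := x) (b := y))

theorem ConvexOn.add_inner_le (hΦ : ∀ x, HasFDerivAt Φ (innerSL ℝ (g x)) x)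
    (hconv : ConvexOn ℝ Set.univ Φ) (x y : E) : Φ x + ⟪g x, y - x⟫ ≤ Φ y := by
  have hline : ConvexOn ℝ Set.univ (Φ ∘ lineMap (k := ℝ) x y) := by
    simpa using hconv.comp_affineMap (lineMap x y : ℝ →ᵃ[ℝ] E)
  have h := hline.le_slope_of_hasDerivAt (Set.mem_univ 0) (Set.mem_univ 1) one_pos
    (by simpa using hasDerivAt_comp_lineMap hΦ x y 0)
  simp only [slope, sub_zero, inv_one, Function.comp_apply, lineMap_apply_one,
    lineMap_apply_zero, vsub_eq_sub, smul_eq_mul, one_mul] at h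
  linarith

theorem ConvexOn.inner_sub_nonneg (hΦ : ∀ x, HasFDerivAt Φ (innerSL ℝ (g x)) x)
    (hconv : ConvexOn ℝ Set.univ Φ) (x y : E) : 0 ≤ ⟪g x - g y, x - y⟫ := by
  have hxy := hconv.add_inner_le hΦ x y
  have hyx := hconv.add_inner_le hΦ y x
  rw [← neg_sub x y, inner_neg_right] at hxy
  rw [inner_sub_left]
  linarith

theorem convexOn_univ_of_inner_sub_nonneg (hΦ : ∀ x, HasFDerivAt Φ (innerSL ℝ (g x)) x)
    (hmono : ∀ x y, 0 ≤ ⟪g x - g y, x - y⟫) : ConvexOn ℝ Set.univ Φ := by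
  refine ⟨convex_univ, fun x _ y _ a b ha hb hab => ?_⟩
  have hline : ConvexOn ℝ Set.univ (Φ ∘ lineMap (k := ℝ) x y) := by
    refine Monotone.convexOn_univ_of_deriv
      (fun t => (hasDerivAt_comp_lineMap hΦ x y t).differentiableAt) fun s t hst => ?_
    rw [(hasDerivAt_comp_lineMap hΦ x y s).deriv, (hasDerivAt_comp_lineMap hΦ x y t).deriv,
      ← sub_nonneg, ← inner_sub_left]
    rcases hst.eq_or_lt with rfl | hlt
    · simp
    have hts : lineMap x y t - lineMap x y s = (t - s) • (y - x) := by
      simp only [lineMap_apply_module']; module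
    have h := hmono (lineMap x y t) (lineMap x y s)
    rw [hts, real_inner_smul_right] at h
    exact nonneg_of_mul_nonneg_right h (sub_pos.2 hlt)
  obtain rfl : a = 1 - b := by linarith
  simpa [lineMap_apply_module] using hline.2 (Set.mem_univ 0) (Set.mem_univ 1) ha hb hab

theorem HasFDerivAt.sub_half_mul_norm_sq {x v : E} (hΦ : HasFDerivAt Φ (innerSL ℝ v) x)
    (c : ℝ) : HasFDerivAt (fun u => Φ u - c / 2 * ‖u‖ ^ 2) (innerSL ℝ (v - c • x)) x := by
  refine (hΦ.sub ((hasStrictFDerivAt_norm_sq x).hasFDerivAt.const_mul (c / 2))).congr_fderiv ?_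
  rw [map_sub, map_smul]
  module

theorem HasFDerivAt.half_mul_norm_sq_sub {x v : E} (hΦ : HasFDerivAt Φ (innerSL ℝ v) x)
    (c : ℝ) : HasFDerivAt (fun u => c / 2 * ‖u‖ ^ 2 - Φ u) (innerSL ℝ (c • x - v)) x := by
  refine (((hasStrictFDerivAt_norm_sq x).hasFDerivAt.const_mul (c / 2)).sub hΦ).congr_fderiv ?_
  rw [map_sub, map_smul]
  module

theorem le_add_inner_add_of_convexOn_half_mul_norm_sq_sub
    (hΦ : ∀ x, HasFDerivAt Φ (innerSL ℝ (g x)) x) {M : ℝ}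
    (hconv : ConvexOn ℝ Set.univ fun u => M / 2 * ‖u‖ ^ 2 - Φ u) (p q : E) :
    Φ q ≤ Φ p + ⟪g p, q - p⟫ + M / 2 * ‖q - p‖ ^ 2 := by
  have h := hconv.add_inner_le (fun x => (hΦ x).half_mul_norm_sq_sub M) p q
  rw [inner_sub_left, real_inner_smul_left, inner_sub_right, real_inner_self_eq_norm_sq] at h
  rw [norm_sub_sq_real, real_inner_comm p q]
  linarith

theorem convexOn_half_mul_norm_sq_sub_of_lipschitz
    (hΦ : ∀ x, HasFDerivAt Φ (innerSL ℝ (g x)) x) {L : ℝ}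
    (hlip : ∀ x y, ‖g x - g y‖ ≤ L * ‖x - y‖) :
    ConvexOn ℝ Set.univ fun u => L / 2 * ‖u‖ ^ 2 - Φ u := by
  refine convexOn_univ_of_inner_sub_nonneg (fun x => (hΦ x).half_mul_norm_sq_sub L)
    fun x y => ?_
  have hcs := real_inner_le_norm (g x - g y) (x - y)
  have hlip' := mul_le_mul_of_nonneg_right (hlip x y) (norm_nonneg (x - y))
  have hexp : (L • x - g x) - (L • y - g y) = L • (x - y) - (g x - g y) := by module
  rw [hexp, inner_sub_left, real_inner_smul_left, real_inner_self_eq_norm_sq]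
  nlinarith

theorem ConvexOn.norm_sub_sq_le_mul_inner (hΦ : ∀ x, HasFDerivAt Φ (innerSL ℝ (g x)) x)
    (hconv : ConvexOn ℝ Set.univ Φ) {M : ℝ} (hM : 0 < M)
    (hsmooth : ConvexOn ℝ Set.univ fun u => M / 2 * ‖u‖ ^ 2 - Φ u) (x y : E) :
    ‖g x - g y‖ ^ 2 ≤ M * ⟪g x - g y, x - y⟫ := by
  have half : ∀ x y : E, 2 * M * (Φ y + ⟪g y, x - y⟫) + ‖g x - g y‖ ^ 2 ≤ 2 * M * Φ x := by
    intro x y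
    set u := g x - g y
    -- `z` minimises the quadratic upper model of `Φ - ⟪g y, ·⟫` at `x`.
    set z := x - M⁻¹ • u
    have hlow := hconv.add_inner_le hΦ y z
    have hup := le_add_inner_add_of_convexOn_half_mul_norm_sq_sub hΦ hsmooth x z
    have hzx : z - x = -M⁻¹ • u := by module
    have hzy : z - y = (x - y) - M⁻¹ • u := by module
    have hu : ⟪g x, u⟫ - ⟪g y, u⟫ = ‖u‖ ^ 2 := by
      rw [← inner_sub_left, real_inner_self_eq_norm_sq]
    rw [hzx, norm_smul, mul_pow, Real.norm_eq_abs, sq_abs, real_inner_smul_right] at hup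
    rw [hzy, inner_sub_right, real_inner_smul_right] at hlow
    have hM' : M * M⁻¹ = 1 := mul_inv_cancel₀ hM.ne'
    linear_combination (2 * M) * hlow + (2 * M) * hup - 2 * (M * M⁻¹) * hu
      + ‖u‖ ^ 2 * (M * M⁻¹ - 1) * hM'
  have hxy := half x y
  have hyx := half y x
  rw [norm_sub_rev] at hyx
  rw [← neg_sub x y, inner_neg_right] at hyx
  rw [inner_sub_left]
  linarith

theorem ConvexOn.mul_norm_sub_sq_add_norm_sub_sq_le_mul_inner
    (hΦ : ∀ x, HasFDerivAt Φ (innerSL ℝ (g x)) x) {ρ L : ℝ} (hL : 0 ≤ L)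
    (hsc : ConvexOn ℝ Set.univ fun u => Φ u - ρ / 2 * ‖u‖ ^ 2)
    (hlip : ∀ x y, ‖g x - g y‖ ≤ L * ‖x - y‖) (x y : E) :
    ρ * L * ‖x - y‖ ^ 2 + ‖g x - g y‖ ^ 2 ≤ (ρ + L) * ⟪g x - g y, x - y⟫ := by
  have hφ x := (hΦ x).sub_half_mul_norm_sq ρ
  have hsub : (g x - ρ • x) - (g y - ρ • y) = (g x - g y) - ρ • (x - y) := by module
  rcases le_or_gt L ρ with hLρ | hρL
  · have hmono := hsc.inner_sub_nonneg hφ x y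
    rw [hsub, inner_sub_left, real_inner_smul_left, real_inner_self_eq_norm_sq] at hmono
    have hg : ‖g x - g y‖ ^ 2 ≤ (L * ‖x - y‖) ^ 2 := by gcongr; exact hlip x y
    nlinarith [mul_le_mul_of_nonneg_left hmono (by linarith : 0 ≤ ρ + L),
      mul_nonneg (mul_nonneg (sub_nonneg.2 hLρ) (by linarith : 0 ≤ ρ + L)) (sq_nonneg ‖x - y‖)]
  · have hsmooth : ConvexOn ℝ Set.univ
        fun u => (L - ρ) / 2 * ‖u‖ ^ 2 - (Φ u - ρ / 2 * ‖u‖ ^ 2) := by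
      convert convexOn_half_mul_norm_sq_sub_of_lipschitz hΦ hlip using 2 with u
      ring
    have hco := hsc.norm_sub_sq_le_mul_inner hφ (sub_pos.2 hρL) hsmooth x y
    rw [hsub, norm_sub_sq_real, real_inner_smul_right, inner_sub_left _ (ρ • _),
      real_inner_smul_left, real_inner_self_eq_norm_sq, norm_smul, Real.norm_eq_abs, mul_pow,
      sq_abs] at hco
    linarith

theorem norm_sub_one_div_smul_le_sqrt_mul_norm {d v : E} {ρ L γ : ℝ} (hρL : 0 < ρ + L) (hγ : (ρ + L) / 2 ≤ γ)
    (h : ρ * L * ‖d‖ ^ 2 + ‖v‖ ^ 2 ≤ (ρ + L) * ⟪v, d⟫) :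
    ‖d - (1 / γ) • v‖ ≤ √(1 - 2 * ρ * L / (γ * (ρ + L))) * ‖d‖ := by
  have hγ0 : 0 < γ := by linarith
  have hc0 : 0 ≤ 1 - 2 * ρ * L / (γ * (ρ + L)) := by
    rw [sub_nonneg, div_le_one (by positivity)]
    nlinarith [sq_nonneg (ρ - L)]
  have hsq : ‖d - (1 / γ) • v‖ ^ 2 ≤ (1 - 2 * ρ * L / (γ * (ρ + L))) * ‖d‖ ^ 2 := by
    rw [norm_sub_sq_real, real_inner_smul_right, norm_smul, Real.norm_eq_abs,
      abs_of_pos (by positivity), real_inner_comm]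
    field_simp
    nlinarith [mul_le_mul_of_nonneg_left h hγ0.le,
      mul_le_mul_of_nonneg_right hγ (sq_nonneg ‖v‖)]
  calc ‖d - (1 / γ) • v‖ = √(‖d - (1 / γ) • v‖ ^ 2) := (Real.sqrt_sq (norm_nonneg _)).symm
    _ ≤ √((1 - 2 * ρ * L / (γ * (ρ + L))) * ‖d‖ ^ 2) := Real.sqrt_le_sqrt hsq
    _ = √(1 - 2 * ρ * L / (γ * (ρ + L))) * ‖d‖ := by
      rw [Real.sqrt_mul hc0, Real.sqrt_sq (norm_nonneg _)]

end ConvexGradient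

/-- Contraction factor of the gradient step: if `f` is
`ρ`-strongly convex with `L`-Lipschitz gradient and `γ ≥ (ρ+L)/2`, then
`G_γ(x) = x − (1/γ)·∇f(x)` is Lipschitz with constant
`√(1 − 2ρL/(γ(ρ+L)))`, and this constant lies in `[0, 1)`. -/
theorem stmt14
    {E : Type*} [NormedAddCommGroup E] [InnerProductSpace ℝ E]
    (f : E → ℝ) (gradf : E → E)
    (hgrad : ∀ x : E, HasFDerivAt f (innerSL ℝ (gradf x)) x)
    (ρ L : ℝ) (hρ : 0 < ρ) (hL : 0 < L)
    (hsc : ConvexOn ℝ Set.univ (fun u : E => f u - (ρ / 2) * ‖u‖ ^ 2))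
    (hlip : ∀ x y : E, ‖gradf x - gradf y‖ ≤ L * ‖x - y‖)
    (γ : ℝ) (hγ : γ ≥ (ρ + L) / 2)
    (G : E → E) (hG : ∀ x : E, G x = x - (1 / γ) • gradf x) :
    (∀ x y : E, ‖G x - G y‖ ≤
        Real.sqrt (1 - 2 * ρ * L / (γ * (ρ + L))) * ‖x - y‖) ∧
      0 ≤ Real.sqrt (1 - 2 * ρ * L / (γ * (ρ + L))) ∧
      Real.sqrt (1 - 2 * ρ * L / (γ * (ρ + L))) < 1 := by
  have hγ0 : 0 < γ := by linarith
  refine ⟨fun x y => ?_, Real.sqrt_nonneg _, ?_⟩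
  · have hstep : G x - G y = (x - y) - (1 / γ) • (gradf x - gradf y) := by
      rw [hG, hG]; module
    rw [hstep]
    exact norm_sub_one_div_smul_le_sqrt_mul_norm (by linarith) hγ
      (hsc.mul_norm_sub_sq_add_norm_sub_sq_le_mul_inner hgrad hL.le hlip x y)
  · rw [Real.sqrt_lt' one_pos, one_pow]
    exact sub_lt_self 1 (by positivity)
end
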